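/- In a Jordan algebra over a field of characteristic not 2, for all a, b the linearised quadratic identity holds: 4 Q_{a,b}^2 = 4 Q_{a*b} + 2 Q_{a^2, b^2} - Q_a Q_b - Q_b Q_a, where Q_{a,b} := T_a T_b + T_b T_a - T_{a*b} is the triple-product operator and Q_c := 2 T_c^2 - T_{c^2}. -/

import Mathlib

/-!
`Q_{a²} = Q_a²` follows from `[T_a, T_{a²}] = 0` and the once-linearized Jordan identity, which
expresses `T_{a³}` and `T_{a⁴}` through `T_a` and `T_{a²}`. The theorem is the `t²`-coefficient of
`Q_{(a+tb)²} = Q_{a+tb}²`: adding the cases `t = 1` and `t = -1` cancels the odd coefficients, and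
the `t⁰`, `t⁴` coefficients are the identity at `a` and at `b`.
-/

section
variable {F V : Type*} [Field F] [AddCommGroup V] [Module F V] (mul : V →ₗ[F] V →ₗ[F] V)

def quadOp (a : V) : Module.End F V := 2 • (mul a * mul a) - mul (mul a a)

def tripleOp (a b : V) : Module.End F V := mul a * mul b + mul b * mul a - mul (mul a b)

variable {mul}

theorem commute_mul_mul_self (comm : ∀ a b : V, mul a b = mul b a)
    (jordan : ∀ a b : V, mul a (mul b (mul a a)) = mul (mul a b) (mul a a)) (a : V) :
    Commute (mul a) (mul (mul a a)) :=
  LinearMap.ext fun b => by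
    rw [Module.End.mul_apply, Module.End.mul_apply, comm _ b, jordan, comm]

theorem jordan_linearized (h2 : (2 : F) ≠ 0) (comm : ∀ a b : V, mul a b = mul b a)
    (jordan : ∀ a b : V, mul a (mul b (mul a a)) = mul (mul a b) (mul a a)) (a b : V) :
    mul (mul b (mul a a)) + 2 • (mul a * mul b * mul a) =
      mul (mul a a) * mul b + 2 • (mul (mul a b) * mul a) := by
  ext x
  -- the part of `jordan (a + t • x) b` linear in `t`, extracted from `t = 1` and `t = -1`
  apply smul_right_injective V h2
  have hp := jordan (a + x) b
  have hm := jordan (a - x) b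
  have hx := jordan x b
  simp only [map_add, map_sub, LinearMap.add_apply, LinearMap.sub_apply, comm x a] at hp hm
  simp only [LinearMap.add_apply, LinearMap.smul_apply, Module.End.mul_apply]
  rw [comm _ x, comm (mul a a), comm b x]
  linear_combination (norm := module) hp - hm - 2 • hx

theorem quadOp_mul_self (h2 : (2 : F) ≠ 0) (comm : ∀ a b : V, mul a b = mul b a)
    (jordan : ∀ a b : V, mul a (mul b (mul a a)) = mul (mul a b) (mul a a)) (a : V) :
    quadOp mul (mul a a) = quadOp mul a ^ 2 := by
  have hcube := jordan_linearized h2 comm jordan a a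
  have hfourth := jordan_linearized h2 comm jordan a (mul a a)
  have hc := (commute_mul_mul_self comm jordan a).eq
  rw [quadOp, quadOp, eq_sub_of_add_eq hfourth, eq_sub_of_add_eq hcube, ← sub_eq_zero]
  calc _ = 2 • (mul a * (mul a * mul (mul a a) - mul (mul a a) * mul a)) +
        4 • ((mul a * mul (mul a a) - mul (mul a a) * mul a) * mul a) := by noncomm_ring
    _ = 0 := by simp only [hc, sub_self, mul_zero, zero_mul, smul_zero, add_zero]

theorem quadOp_add (comm : ∀ a b : V, mul a b = mul b a) (a b : V) :
    quadOp mul (a + b) = quadOp mul a + quadOp mul b + 2 • tripleOp mul a b := by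
  simp only [quadOp, tripleOp, map_add, LinearMap.add_apply, comm b a]
  noncomm_ring

theorem quadOp_sub (comm : ∀ a b : V, mul a b = mul b a) (a b : V) :
    quadOp mul (a - b) = quadOp mul a + quadOp mul b - 2 • tripleOp mul a b := by
  simp only [quadOp, tripleOp, map_sub, LinearMap.sub_apply, comm b a]
  noncomm_ring

theorem quadOp_two_nsmul (a : V) : quadOp mul (2 • a) = 4 • quadOp mul a := by
  simp only [quadOp, map_nsmul, LinearMap.smul_apply]
  noncomm_ring

theorem mul_add_self (comm : ∀ a b : V, mul a b = mul b a) (a b : V) :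
    mul (a + b) (a + b) = mul a a + mul b b + 2 • mul a b := by
  simp only [map_add, LinearMap.add_apply, comm b a]
  module

theorem mul_sub_self (comm : ∀ a b : V, mul a b = mul b a) (a b : V) :
    mul (a - b) (a - b) = mul a a + mul b b - 2 • mul a b := by
  simp only [map_sub, LinearMap.sub_apply, comm b a]
  module

theorem quadOp_add_add_quadOp_sub (comm : ∀ a b : V, mul a b = mul b a) (a b : V) :
    quadOp mul (a + b) + quadOp mul (a - b) = 2 • quadOp mul a + 2 • quadOp mul b := by
  rw [quadOp_add comm, quadOp_sub comm]
  abel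

theorem four_nsmul_tripleOp_sq (h2 : (2 : F) ≠ 0) (comm : ∀ a b : V, mul a b = mul b a)
    (jordan : ∀ a b : V, mul a (mul b (mul a a)) = mul (mul a b) (mul a a)) (a b : V) :
    4 • tripleOp mul a b ^ 2 = 4 • quadOp mul (mul a b) + 2 • tripleOp mul (mul a a) (mul b b)
      - quadOp mul a * quadOp mul b - quadOp mul b * quadOp mul a := by
  have hsum : quadOp mul (mul (a + b) (a + b)) + quadOp mul (mul (a - b) (a - b)) =
      quadOp mul (a + b) ^ 2 + quadOp mul (a - b) ^ 2 := by
    rw [quadOp_mul_self h2 comm jordan, quadOp_mul_self h2 comm jordan]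
  rw [mul_add_self comm, mul_sub_self comm, quadOp_add_add_quadOp_sub comm, quadOp_add comm,
    quadOp_two_nsmul, quadOp_mul_self h2 comm jordan, quadOp_mul_self h2 comm jordan,
    quadOp_add comm, quadOp_sub comm] at hsum
  apply smul_right_injective (Module.End F V) h2
  simp only [ofNat_smul_eq_nsmul]
  linear_combination (norm := noncomm_ring) -hsum

end

theorem stmt12 {F V : Type*} [Field F] (h2 : (2 : F) ≠ 0)
    [AddCommGroup V] [Module F V]
    (mul : V →ₗ[F] V →ₗ[F] V)
    (comm : ∀ a b : V, mul a b = mul b a)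
    (jordan : ∀ a b : V, mul a (mul b (mul a a)) = mul (mul a b) (mul a a))
    (Q : V → Module.End F V)
    (hQ : ∀ a : V, Q a = 2 • (mul a * mul a) - mul (mul a a))
    (Q2 : V → V → Module.End F V)
    (hQ2 : ∀ a b : V, Q2 a b = mul a * mul b + mul b * mul a - mul (mul a b)) :
    ∀ a b : V, 4 • (Q2 a b) ^ 2 = 4 • Q (mul a b) + 2 • Q2 (mul a a) (mul b b) - Q a * Q b - Q b * Q a := by
  obtain rfl : Q = quadOp mul := funext hQ
  obtain rfl : Q2 = tripleOp mul := funext fun a => funext (hQ2 a)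
  exact four_nsmul_tripleOp_sq h2 comm jordan
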